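/- arXiv:2306.05124 — 2 statements merged into one kernel-verified Lean document; each statement's English description precedes it below -/
import Mathlib

section
/- Let f : ℝ^m → ℝ^m be a flux and U : ℝ^m → ℝ a strictly convex entropy. Consider a conservative three-point finite-volume scheme u¹_k = u⁰_k + λ(g(u⁰_{k-1},u⁰_k) - g(u⁰_k,u⁰_{k+1})) with consistent numerical flux g (i.e. g(u,u) = f(u)) and grid constant λ = Δt/Δx > 0. If, for every Riemann initial datum (u_l for k ≤ 0, u_r for k > 0), the scheme minimizes the discrete total entropy Σ_k U(u¹_k)Δx after one step among all consistent conservative three-point schemes, then necessarily g(u_l,u_r) = (f(u_l)+f(u_r))/2 + (u_l - u_r)/(2λ), i.e. g is the classical Lax–Friedrichs flux. -/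
/-- Among all consistent conservative three-point schemes, the one minimizing
the discrete total entropy after one step on every Riemann problem must use
the classical Lax–Friedrichs flux. Since a consistent three-point scheme
applied to Riemann data only changes the cells `k = 0` and `k = 1`, minimality
of the total entropy is expressed via those two cells. -/
theorem lax_friedrichs_is_entropy_rate_minimizer {m : ℕ}
    (f : (Fin m → ℝ) → (Fin m → ℝ))
    (U : (Fin m → ℝ) → ℝ) (hU : StrictConvexOn ℝ Set.univ U)
    (lam : ℝ) (hlam : 0 < lam)
    (Δx : ℝ) (hΔx : 0 < Δx)
    (g : (Fin m → ℝ) → (Fin m → ℝ) → (Fin m → ℝ))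
    (hg : ∀ u, g u u = f u)
    (hmin : ∀ g' : (Fin m → ℝ) → (Fin m → ℝ) → (Fin m → ℝ),
      (∀ u, g' u u = f u) →
      ∀ ul ur : Fin m → ℝ,
        (fun (h : (Fin m → ℝ) → (Fin m → ℝ) → (Fin m → ℝ)) =>
          let u0 : ℤ → (Fin m → ℝ) := fun k => if k ≤ 0 then ul else ur
          let u1 : ℤ → (Fin m → ℝ) := fun k =>
            u0 k + lam • (h (u0 (k - 1)) (u0 k) - h (u0 k) (u0 (k + 1)))
          Δx * U (u1 0) + Δx * U (u1 1)) g ≤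
        (fun (h : (Fin m → ℝ) → (Fin m → ℝ) → (Fin m → ℝ)) =>
          let u0 : ℤ → (Fin m → ℝ) := fun k => if k ≤ 0 then ul else ur
          let u1 : ℤ → (Fin m → ℝ) := fun k =>
            u0 k + lam • (h (u0 (k - 1)) (u0 k) - h (u0 k) (u0 (k + 1)))
          Δx * U (u1 0) + Δx * U (u1 1)) g') :
    ∀ ul ur : Fin m → ℝ,
      g ul ur = (1 / 2 : ℝ) • (f ul + f ur) + (1 / (2 * lam)) • (ul - ur) := by

  intro ul ur
  have hlam' : lam ≠ 0 := ne_of_gt hlam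
  set gLF : (Fin m → ℝ) → (Fin m → ℝ) → (Fin m → ℝ) :=
    fun a b => (1 / 2 : ℝ) • (f a + f b) + (1 / (2 * lam)) • (a - b) with hgLF
  have hcons : ∀ u, gLF u u = f u := by
    intro u
    funext i
    simp [hgLF, Pi.smul_apply, Pi.add_apply, Pi.sub_apply]
    ring
  have key := hmin gLF hcons ul ur
  simp only at key
  set G := g ul ur with hG
  set a : Fin m → ℝ := ul + lam • (f ul - G) with ha
  set b : Fin m → ℝ := ur + lam • (G - f ur) with hb
  have h0 : ((0:ℤ) ≤ 0) = True := by norm_num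
  have key' : Δx * U a + Δx * U b ≤
      Δx * U ((1/2 : ℝ) • (a + b)) + Δx * U ((1/2 : ℝ) • (a + b)) := by
    have e1 : (if ((0:ℤ) - 1 ≤ 0) then ul else ur) = ul := by norm_num
    have e2 : (if ((0:ℤ) + 1 ≤ 0) then ul else ur) = ur := by norm_num
    have e3 : (if ((1:ℤ) - 1 ≤ 0) then ul else ur) = ul := by norm_num
    have e4 : (if ((1:ℤ) ≤ 0) then ul else ur) = ur := by norm_num
    have e5 : (if ((1:ℤ) + 1 ≤ 0) then ul else ur) = ur := by norm_num
    have e6 : (if ((0:ℤ) ≤ 0) then ul else ur) = ul := by norm_num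
    simp only [e1, e2, e3, e4, e5, e6, hg, hcons] at key
    have eqa : ul + lam • (f ul - gLF ul ur) = (1/2 : ℝ) • (a + b) := by
      funext i
      simp [hgLF, ha, hb, Pi.smul_apply, Pi.add_apply, Pi.sub_apply]
      field_simp
      ring
    have eqb : ur + lam • (gLF ul ur - f ur) = (1/2 : ℝ) • (a + b) := by
      funext i
      simp [hgLF, ha, hb, Pi.smul_apply, Pi.add_apply, Pi.sub_apply]
      field_simp
      ring
    rw [eqa, eqb] at key
    exact key
  have hab : a = b := by
    by_contra hne
    have hs := hU.2 (Set.mem_univ a) (Set.mem_univ b) hne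
      (by norm_num : (0:ℝ) < 1/2) (by norm_num : (0:ℝ) < 1/2) (by norm_num)
    have hmid : (1/2 : ℝ) • (a + b) = (1/2 : ℝ) • a + (1/2 : ℝ) • b := by
      rw [smul_add]
    rw [hmid] at key'
    have hs' : U ((1/2 : ℝ) • a + (1/2 : ℝ) • b) < (1/2) * U a + (1/2) * U b := by
      simpa [smul_eq_mul] using hs
    nlinarith [key', hs', hΔx]
  have habi : ∀ i, ul i + lam * (f ul i - G i) = ur i + lam * (G i - f ur i) := by
    intro i
    have := congrFun hab i
    simpa [ha, hb, Pi.smul_apply, Pi.add_apply, Pi.sub_apply] using this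
  funext i
  have h := habi i
  simp [Pi.smul_apply, Pi.add_apply, Pi.sub_apply]
  field_simp
  ring_nf
  ring_nf at h
  linarith
end

section
/- Dissipativity of the generator in the entropy pairing: let ω ∈ ℝ^N be a positive weight vector and G ∈ ℝ^{N×N} a matrix such that for all sufficiently small τ > 0, the map u ↦ u + τ G u strictly decreases the discrete entropy E(u) = Σ_k ω_k U(u_k) for every non-constant u and every strictly convex U (e.g. because I + τG is a positive conservative filter and the null space of G consists only of constants). Then for every non-constant u and strictly convex differentiable U, Σ_k ω_k ⟨∇U(u_k), (Gu)_k⟩ < 0. -/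
lemma fderiv_le_sub_of_convex {m : ℕ} {U : (Fin m → ℝ) → ℝ}
    (hU : ConvexOn ℝ Set.univ U) (hUdiff : Differentiable ℝ U)
    (x v : Fin m → ℝ) : (fderiv ℝ U x) v ≤ U (x + v) - U x := by
  set g : ℝ → ℝ := fun t => U (x + t • v) with hg
  have hgc : ConvexOn ℝ Set.univ g := by
    refine ⟨convex_univ, fun s _ t _ a b ha hb hab => ?_⟩
    simp only [smul_eq_mul]
    have hx : a • (x + s • v) + b • (x + t • v)
        = (a + b) • x + (a * s + b * t) • v := by module
    rw [hab, one_smul] at hx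
    simp only [hg]
    calc U (x + (a * s + b * t) • v) = U (a • (x + s • v) + b • (x + t • v)) := by rw [hx]
      _ ≤ a * U (x + s • v) + b * U (x + t • v) :=
          hU.2 (Set.mem_univ _) (Set.mem_univ _) ha hb hab
  have hinner : HasDerivAt (fun t : ℝ => x + t • v) v 0 := by
    simpa using ((hasDerivAt_id (0:ℝ)).smul_const v).const_add x
  have hU0 : HasFDerivAt U (fderiv ℝ U x) (x + (0:ℝ) • v) := by
    simpa using (hUdiff x).hasFDerivAt
  have hd : HasDerivAt g ((fderiv ℝ U x) v) 0 := by
    exact hU0.comp_hasDerivAt 0 hinner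
  have := hgc.le_slope_of_hasDerivAt (Set.mem_univ (0:ℝ)) (Set.mem_univ (1:ℝ))
    one_pos hd
  simpa [slope, hg] using this

/-- Dissipativity of the generator in the entropy pairing: if small forward
Euler steps `u ↦ u + τ G u` strictly decrease every strictly convex discrete
entropy for every non-constant state, then the entropy pairing
`Σ_k ω_k ⟨∇U(u_k), (Gu)_k⟩` is strictly negative for non-constant `u`. -/
theorem generator_entropy_pairing_neg {m N : ℕ}
    (ω : Fin N → ℝ) (hω : ∀ k, 0 < ω k)
    (G : Matrix (Fin N) (Fin N) ℝ)
    (hdiss : ∃ τ₀ > (0:ℝ), ∀ τ : ℝ, 0 < τ → τ ≤ τ₀ →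
      ∀ V : (Fin m → ℝ) → ℝ, StrictConvexOn ℝ Set.univ V →
      ∀ w : Fin N → (Fin m → ℝ), (¬ ∃ c, ∀ k, w k = c) →
        ∑ k, ω k * V (w k + τ • ∑ l, G k l • w l) < ∑ k, ω k * V (w k))
    (U : (Fin m → ℝ) → ℝ) (hU : StrictConvexOn ℝ Set.univ U)
    (hUdiff : Differentiable ℝ U)
    (u : Fin N → (Fin m → ℝ)) (hu : ¬ ∃ c, ∀ k, u k = c) :
    ∑ k, ω k * (fderiv ℝ U (u k)) (∑ l, G k l • u l) < 0 := by
  obtain ⟨τ₀, hτ₀, hstep⟩ := hdiss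
  have hE := hstep τ₀ hτ₀ le_rfl U hU u hu
  have key : τ₀ * ∑ k, ω k * (fderiv ℝ U (u k)) (∑ l, G k l • u l) ≤
      ∑ k, ω k * U (u k + τ₀ • ∑ l, G k l • u l) - ∑ k, ω k * U (u k) := by
    rw [Finset.mul_sum, ← Finset.sum_sub_distrib]
    refine Finset.sum_le_sum fun k _ => ?_
    have h1 := fderiv_le_sub_of_convex hU.convexOn hUdiff (u k)
      (τ₀ • ∑ l, G k l • u l)
    have h2 : (fderiv ℝ U (u k)) (τ₀ • ∑ l, G k l • u l)
        = τ₀ * (fderiv ℝ U (u k)) (∑ l, G k l • u l) := by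
      simp [map_smul]
    rw [h2] at h1
    calc τ₀ * (ω k * (fderiv ℝ U (u k)) (∑ l, G k l • u l))
        = ω k * (τ₀ * (fderiv ℝ U (u k)) (∑ l, G k l • u l)) := by ring
      _ ≤ ω k * (U (u k + τ₀ • ∑ l, G k l • u l) - U (u k)) :=
          mul_le_mul_of_nonneg_left h1 (hω k).le
      _ = ω k * U (u k + τ₀ • ∑ l, G k l • u l) - ω k * U (u k) := by ring
  have hneg : τ₀ * ∑ k, ω k * (fderiv ℝ U (u k)) (∑ l, G k l • u l) < 0 :=
    lt_of_le_of_lt key (by linarith)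
  by_contra h
  push_neg at h
  nlinarith
end
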